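/- Let X be a discrete metric space and T ∈ B(ℓ²(X)). If for every ε > 0 there exist δ > 0 and R > 0 such that ‖[T,h]‖ < ε for every h ∈ ℓ∞(X) with ‖h‖∞ = 1 satisfying |h(x) − h(y)| < δ whenever d(x,y) ≤ R, then T is quasi-local: for every ε > 0 there is S > 0 such that ‖f₁ T f₂‖ < ε‖f₁‖∞‖f₂‖∞ whenever d(supp f₁, supp f₂) > S. -/
import Mathlib


open scoped ENNReal
open Metric Set Function

noncomputable section

variable {X : Type*}

/-- The pointwise product of an `ℓ∞` function and an `ℓ²` function is again `ℓ²`. -/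
theorem memℓp_two_mul (f : lp (fun _ : X => ℂ) ∞) (ξ : lp (fun _ : X => ℂ) 2) :
    Memℓp (fun x => f x * ξ x) 2 := by
  apply memℓp_gen
  have h2 : (2 : ℝ≥0∞).toReal = 2 := by norm_num
  rw [h2]
  have hsum : Summable fun x => ‖f‖ ^ (2:ℝ) * ‖ξ x‖ ^ (2:ℝ) :=
    (by simpa [h2] using (lp.memℓp ξ).summable (by rw [h2]; norm_num) :
      Summable fun x => ‖ξ x‖ ^ (2:ℝ)).mul_left _
  refine Summable.of_nonneg_of_le (fun x => by positivity) (fun x => ?_) hsum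
  have h1 : ‖f x * ξ x‖ ≤ ‖f‖ * ‖ξ x‖ := by
    rw [norm_mul]
    exact mul_le_mul_of_nonneg_right (lp.norm_apply_le_norm (by norm_num) f x) (norm_nonneg _)
  calc ‖f x * ξ x‖ ^ (2:ℝ) ≤ (‖f‖ * ‖ξ x‖) ^ (2:ℝ) := by
        gcongr
    _ = ‖f‖ ^ (2:ℝ) * ‖ξ x‖ ^ (2:ℝ) := by
        rw [Real.mul_rpow (norm_nonneg _) (norm_nonneg _)]

/-- Multiplication by a bounded function `f ∈ ℓ∞(X)`, as a bounded operator on `ℓ²(X)`. -/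
def mulOp (f : lp (fun _ : X => ℂ) ∞) :
    lp (fun _ : X => ℂ) 2 →L[ℂ] lp (fun _ : X => ℂ) 2 :=
  LinearMap.mkContinuous
    { toFun := fun ξ => ⟨fun x => f x * ξ x, memℓp_two_mul f ξ⟩
      map_add' := fun ξ η => Subtype.ext <| funext fun x => by
        simp only [lp.coeFn_add, Pi.add_apply, mul_add]
      map_smul' := fun c ξ => Subtype.ext <| funext fun x => by
        simp only [lp.coeFn_smul, Pi.smul_apply, smul_eq_mul, RingHom.id_apply]
        ring }
    ‖f‖ (by
      intro ξ
      refine lp.norm_le_of_forall_sum_le (by norm_num) (by positivity) fun s => ?_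
      have hb : ∀ x ∈ s, ‖f x * ξ x‖ ^ ((2:ℝ≥0∞).toReal)
          ≤ ‖f‖ ^ ((2:ℝ≥0∞).toReal) * ‖ξ x‖ ^ ((2:ℝ≥0∞).toReal) := by
        intro x _
        rw [← Real.mul_rpow (norm_nonneg _) (norm_nonneg _)]
        refine Real.rpow_le_rpow (norm_nonneg _) ?_ (by norm_num)
        rw [norm_mul]
        exact mul_le_mul_of_nonneg_right (lp.norm_apply_le_norm (by norm_num) f x) (norm_nonneg _)
      calc ∑ x ∈ s, ‖f x * ξ x‖ ^ ((2:ℝ≥0∞).toReal)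
          ≤ ∑ x ∈ s, ‖f‖ ^ ((2:ℝ≥0∞).toReal) * ‖ξ x‖ ^ ((2:ℝ≥0∞).toReal) :=
            Finset.sum_le_sum hb
        _ = ‖f‖ ^ ((2:ℝ≥0∞).toReal) * ∑ x ∈ s, ‖ξ x‖ ^ ((2:ℝ≥0∞).toReal) := by
            rw [Finset.mul_sum]
        _ ≤ ‖f‖ ^ ((2:ℝ≥0∞).toReal) * ‖ξ‖ ^ ((2:ℝ≥0∞).toReal) :=
            mul_le_mul_of_nonneg_left (lp.sum_rpow_le_norm_rpow (by norm_num) ξ s)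
              (Real.rpow_nonneg (norm_nonneg _) _)
        _ = (‖f‖ * ‖ξ‖) ^ ((2:ℝ≥0∞).toReal) :=
            (Real.mul_rpow (norm_nonneg _) (norm_nonneg _)).symm)

theorem mulOp_apply (f : lp (fun _ : X => ℂ) ∞) (ξ : lp (fun _ : X => ℂ) 2) (x : X) :
    (mulOp f ξ) x = f x * ξ x := rfl

/-- `d(supp f, supp g) > R`: every point of the support of `f` is at distance `> R` from
every point of the support of `g`. -/
def SepGT [MetricSpace X] (R : ℝ) (f g : lp (fun _ : X => ℂ) ∞) : Prop :=
  ∀ x ∈ Function.support (⇑f : X → ℂ), ∀ y ∈ Function.support (⇑g : X → ℂ), R < dist x y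

/-- A bounded operator `T` on `ℓ²(X)` is *quasi-local* if for every `ε > 0` there is `R > 0`
such that `‖f T g‖ ≤ ε ‖f‖∞ ‖g‖∞` whenever the supports of `f, g ∈ ℓ∞(X)` are `R`-separated. -/
def QuasiLocal [MetricSpace X]
    (T : lp (fun _ : X => ℂ) 2 →L[ℂ] lp (fun _ : X => ℂ) 2) : Prop :=
  ∀ ε > (0 : ℝ), ∃ R > (0 : ℝ), ∀ f g : lp (fun _ : X => ℂ) ∞, SepGT R f g →
    ‖mulOp f ∘L T ∘L mulOp g‖ ≤ ε * ‖f‖ * ‖g‖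

/-- if for every `ε > 0` there are `δ > 0` and `R > 0` such that `T`
`ε`-commutes with every norm-one `h ∈ ℓ∞(X)` of `(δ, R)`-variation, then `T` is quasi-local. -/
theorem commutant_condition_implies_quasiLocal [MetricSpace X]
    (T : lp (fun _ : X => ℂ) 2 →L[ℂ] lp (fun _ : X => ℂ) 2)
    (hcom : ∀ ε > (0 : ℝ), ∃ δ > (0 : ℝ), ∃ R > (0 : ℝ),
      ∀ h : lp (fun _ : X => ℂ) ∞, ‖h‖ = 1 →
        (∀ x y : X, dist x y ≤ R → ‖h x - h y‖ < δ) →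
        ‖T ∘L mulOp h - mulOp h ∘L T‖ < ε) :
    QuasiLocal T := by
  intro ε hε
  obtain ⟨δ, hδ, R, hR, hcomm⟩ := hcom ε hε
  set S : ℝ := 2 * R / δ with hSdef
  have hSpos : 0 < S := by positivity
  refine ⟨S, hSpos, fun f g hsep => ?_⟩
  by_cases hg : (⇑g : X → ℂ) = 0
  · have hG0 : mulOp g = 0 := by
      ext ξ x
      have hx : g x = 0 := congrFun hg x
      simp [mulOp_apply, hx]
    rw [hG0]
    simp only [ContinuousLinearMap.comp_zero, norm_zero]
    positivity
  obtain ⟨y₀, hy₀⟩ : ∃ y, g y ≠ 0 := by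
    by_contra hcon; push_neg at hcon; exact hg (funext hcon)
  set s : Set X := Function.support (⇑g : X → ℂ) with hsdef
  have hs : s.Nonempty := ⟨y₀, hy₀⟩
  set hre : X → ℝ := fun x => max 0 (1 - Metric.infDist x s / S) with hredef
  have hre01 : ∀ x, 0 ≤ hre x ∧ hre x ≤ 1 := by
    intro x
    constructor
    · exact le_max_left _ _
    · apply max_le (by norm_num)
      have : 0 ≤ Metric.infDist x s / S :=
        div_nonneg Metric.infDist_nonneg hSpos.le
      linarith
  have hre_norm : ∀ x, ‖(hre x : ℂ)‖ ≤ 1 := by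
    intro x
    rw [Complex.norm_real, Real.norm_eq_abs, abs_of_nonneg (hre01 x).1]
    exact (hre01 x).2
  have hmem : Memℓp (fun x => (hre x : ℂ)) ∞ :=
    memℓp_infty ⟨1, by rintro _ ⟨x, rfl⟩; exact hre_norm x⟩
  set h : lp (fun _ : X => ℂ) ∞ := ⟨fun x => (hre x : ℂ), hmem⟩ with hhdef
  have h_apply : ∀ x, h x = (hre x : ℂ) := fun x => rfl
  -- h = 1 on supp g
  have h_one : ∀ y ∈ s, hre y = 1 := by
    intro y hy
    simp [hredef, Metric.infDist_zero_of_mem hy]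
  -- h = 0 on supp f
  have h_zero : ∀ x ∈ Function.support (⇑f : X → ℂ), hre x = 0 := by
    intro x hx
    have hinf : S ≤ Metric.infDist x s := by
      by_contra hlt
      push_neg at hlt
      obtain ⟨y, hy, hdy⟩ := (Metric.infDist_lt_iff hs).mp hlt
      exact absurd hdy (not_lt.mpr (hsep x hx y hy).le)
    have : 1 - Metric.infDist x s / S ≤ 0 := by
      have : 1 ≤ Metric.infDist x s / S := (one_le_div hSpos).mpr hinf
      linarith
    simp [hredef, max_eq_left this]
  -- ‖h‖ = 1
  have hnorm : ‖h‖ = 1 := by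
    apply le_antisymm
    · exact lp.norm_le_of_forall_le zero_le_one hre_norm
    · have := lp.norm_apply_le_norm ENNReal.top_ne_zero h y₀
      rw [h_apply, h_one y₀ hy₀, Complex.ofReal_one, norm_one] at this
      exact this
  -- variation bound
  have hvar : ∀ x y : X, dist x y ≤ R → ‖h x - h y‖ < δ := by
    intro x y hxy
    rw [h_apply, h_apply, ← Complex.ofReal_sub, Complex.norm_real]
    have l1 : |hre x - hre y|
        ≤ |(1 - Metric.infDist x s / S) - (1 - Metric.infDist y s / S)| := by
      rw [hredef]
      simpa [max_comm] using
        abs_max_sub_max_le_abs (1 - Metric.infDist x s / S)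
          (1 - Metric.infDist y s / S) 0
    have l2 : |(1 - Metric.infDist x s / S) - (1 - Metric.infDist y s / S)|
        = |Metric.infDist y s - Metric.infDist x s| / S := by
      have e : (1 - Metric.infDist x s / S) - (1 - Metric.infDist y s / S)
          = (Metric.infDist y s - Metric.infDist x s) / S := by ring
      rw [e, abs_div, abs_of_pos hSpos]
    have l3 : |Metric.infDist y s - Metric.infDist x s| ≤ dist x y := by
      rw [abs_sub_le_iff]
      constructor
      · have := Metric.infDist_le_infDist_add_dist (x := y) (y := x) (s := s)
        rw [dist_comm] at this; linarith
      · have := Metric.infDist_le_infDist_add_dist (x := x) (y := y) (s := s)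
        linarith
    have : |hre x - hre y| ≤ R / S := by
      rw [l2] at l1
      calc |hre x - hre y| ≤ |Metric.infDist y s - Metric.infDist x s| / S := l1
        _ ≤ dist x y / S := by gcongr
        _ ≤ R / S := by gcongr
    have hRS : R / S = δ / 2 := by
      rw [hSdef]; field_simp
    rw [hRS] at this
    rw [Real.norm_eq_abs]
    linarith
  have hbound : ‖T ∘L mulOp h - mulOp h ∘L T‖ < ε := hcomm h hnorm hvar
  -- key algebraic identity
  have key : mulOp f ∘L T ∘L mulOp g
      = mulOp f ∘L (T ∘L mulOp h - mulOp h ∘L T) ∘L mulOp g := by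
    ext ξ x
    have hHG : mulOp h (mulOp g ξ) = mulOp g ξ := by
      apply Subtype.ext
      funext z
      rw [mulOp_apply]
      by_cases hz : g z = 0
      · rw [mulOp_apply g ξ z, hz]; ring
      · rw [h_apply, h_one z hz]; simp
    have hfh : f x * (hre x : ℂ) = 0 := by
      by_cases hfx : f x = 0
      · rw [hfx]; ring
      · rw [h_zero x hfx]; simp
    simp only [ContinuousLinearMap.comp_apply, ContinuousLinearMap.sub_apply,
      mulOp_apply, lp.coeFn_sub, Pi.sub_apply, hHG]
    rw [mul_sub, ← mul_assoc, hfh, zero_mul, sub_zero]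
  rw [key]
  have hA : ‖mulOp f‖ ≤ ‖f‖ := LinearMap.mkContinuous_norm_le _ (norm_nonneg f) _
  have hGn : ‖mulOp g‖ ≤ ‖g‖ := LinearMap.mkContinuous_norm_le _ (norm_nonneg g) _
  calc ‖mulOp f ∘L (T ∘L mulOp h - mulOp h ∘L T) ∘L mulOp g‖
      ≤ ‖mulOp f‖ * ‖(T ∘L mulOp h - mulOp h ∘L T) ∘L mulOp g‖ :=
        ContinuousLinearMap.opNorm_comp_le _ _
    _ ≤ ‖mulOp f‖ * (‖T ∘L mulOp h - mulOp h ∘L T‖ * ‖mulOp g‖) := by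
        gcongr
        exact ContinuousLinearMap.opNorm_comp_le _ _
    _ ≤ ‖f‖ * (ε * ‖g‖) := by
        gcongr
    _ = ε * ‖f‖ * ‖g‖ := by ring
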